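/- Let Σ be a finite nonempty alphabet, φ ⊆ TΣ^ω, and let B and B̄ be TBAs over Σ with L(B) = φ ∩ T_DΣ^ω and L(B̄) = (TΣ^ω ∖ φ) ∩ T_DΣ^ω. Then for every finite timed word ρ ∈ TΣ^*: (i) Terminal(B̄, ρ) ∩ NonEmpty(B̄) = ∅ if and only if V_D(φ)(ρ) = ⊤; and (ii) Terminal(B, ρ) ∩ NonEmpty(B) = ∅ if and only if V_D(φ)(ρ) = ⊥. In particular the monitor M that outputs ⊤ in case (i), ⊥ in case (ii), and ? otherwise satisfies M(ρ) = V_D(φ)(ρ) for all ρ ∈ TΣ^*. (Theorem 2.) -/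
import Mathlib


open Filter

/-! ## Timed words -/

/-- An infinite timed word: a symbol sequence and a timestamp sequence (positions 0,1,2,…
correspond to the paper's positions 1,2,3,…; the convention τ₀ = 0 is used in definitions). -/
abbrev InfTW (α : Type) := (ℕ → α) × (ℕ → ℝ)

/-- `ρ` is a genuine infinite timed word: timestamps are strictly increasing
non-negative reals (strictly above the conventional τ₀ = 0). -/
def IsInfTW {α : Type} (ρ : InfTW α) : Prop := 0 < ρ.2 0 ∧ StrictMono ρ.2

/-- Time divergent infinite timed words. -/
def IsDivergent {α : Type} (ρ : InfTW α) : Prop := IsInfTW ρ ∧ Tendsto ρ.2 atTop atTop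

/-- A finite timed word with `len + 1` letters, at positions `0,…,len`. -/
structure FinTW (α : Type) where
  len : ℕ
  sym : ℕ → α
  time : ℕ → ℝ

/-- `ρ` is a genuine finite timed word: `0 < τ₁ < … < τ_n`. -/
def IsFinTW {α : Type} (ρ : FinTW α) : Prop :=
  0 < ρ.time 0 ∧ ∀ i < ρ.len, ρ.time i < ρ.time (i + 1)

/-- Duration of a finite timed word. -/
def FinTW.dur {α : Type} (ρ : FinTW α) : ℝ := ρ.time ρ.len

/-- Concatenation of a finite timed word with an infinite timed word
(timestamps of the suffix are shifted by the duration). -/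
def FinTW.catInf {α : Type} (ρ : FinTW α) (μ : InfTW α) : InfTW α :=
  (fun i => if i ≤ ρ.len then ρ.sym i else μ.1 (i - ρ.len - 1),
   fun i => if i ≤ ρ.len then ρ.time i else ρ.dur + μ.2 (i - ρ.len - 1))

/-- Concatenation of two finite timed words. -/
def FinTW.catFin {α : Type} (ρ ρ' : FinTW α) : FinTW α where
  len := ρ.len + 1 + ρ'.len
  sym := fun i => if i ≤ ρ.len then ρ.sym i else ρ'.sym (i - ρ.len - 1)
  time := fun i => if i ≤ ρ.len then ρ.time i else ρ.dur + ρ'.time (i - ρ.len - 1)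

/-! ## Verdicts -/

inductive Verdict where
  | top
  | bot
  | unknown
deriving DecidableEq

open Classical in
/-- The verdict (no divergence assumption). -/
noncomputable def Vv {α : Type} (φ : Set (InfTW α)) (ρ : FinTW α) : Verdict :=
  if ∀ μ, IsInfTW μ → ρ.catInf μ ∈ φ then .top
  else if ∀ μ, IsInfTW μ → ρ.catInf μ ∉ φ then .bot
  else .unknown

open Classical in
/-- The verdict under time divergence. -/
noncomputable def VD {α : Type} (φ : Set (InfTW α)) (ρ : FinTW α) : Verdict :=
  if ∀ μ, IsDivergent μ → ρ.catInf μ ∈ φ then .top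
  else if ∀ μ, IsDivergent μ → ρ.catInf μ ∉ φ then .bot
  else .unknown

/-! ## Timed Büchi automata -/

/-- Comparison operators for clock constraints. -/
inductive Cmp where
  | lt
  | le
  | eq
  | ge
  | gt

def Cmp.sat : Cmp → ℝ → ℕ → Prop
  | .lt, x, n => x < n
  | .le, x, n => x ≤ n
  | .eq, x, n => x = n
  | .ge, x, n => (n : ℝ) ≤ x
  | .gt, x, n => (n : ℝ) < x

/-- Clock constraints: finite conjunctions of atoms `c ∼ n`. -/
inductive CC (C : Type) where
  | tt : CC C
  | atom : C → Cmp → ℕ → CC C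
  | and : CC C → CC C → CC C

/-- Satisfaction of a clock constraint by a clock valuation. -/
def CC.sat {C : Type} (v : C → ℝ) : CC C → Prop
  | .tt => True
  | .atom c op n => op.sat (v c) n
  | .and g g' => g.sat v ∧ g'.sat v

/-- Renaming of clocks in a clock constraint. -/
def CC.map {C D : Type} (f : C → D) : CC C → CC D
  | .tt => .tt
  | .atom c op n => .atom (f c) op n
  | .and g g' => .and (g.map f) (g'.map f)

/-- A transition of a TBA. -/
structure TBATrans (α Q C : Type) where
  src : Q
  dst : Q
  sym : α
  reset : Set C
  guard : CC C

/-- A timed Büchi automaton over alphabet `α` with locations `Q` and clocks `C`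
(finiteness of `α`, `Q`, `C` and of the transition set is assumed where needed). -/
structure TBA (α Q C : Type) where
  init : Set Q
  trans : Set (TBATrans α Q C)
  final : Set Q

/-- A state of a TBA: a location together with a clock valuation. -/
abbrev TState (Q C : Type) := Q × (C → ℝ)

/-- `A.step s d a s'`: from state `s`, delaying `d` and reading `a`, the automaton can
move to state `s'` via some transition whose guard is satisfied by `s.2 + d`,
resetting the clocks in the reset set. -/
def TBA.step {α Q C : Type} (A : TBA α Q C) (s : TState Q C) (d : ℝ) (a : α)
    (s' : TState Q C) : Prop :=
  ∃ t ∈ A.trans, t.src = s.1 ∧ t.dst = s'.1 ∧ t.sym = a ∧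
    t.guard.sat (fun c => s.2 c + d) ∧
    (∀ c ∈ t.reset, s'.2 c = 0) ∧ (∀ c ∉ t.reset, s'.2 c = s.2 c + d)

/-- `prevT τ i` is τ_{i-1} with the convention τ₀ = 0 (0-indexed: position `i` of the
word has predecessor timestamp `prevT τ i`). -/
def prevT (τ : ℕ → ℝ) (i : ℕ) : ℝ := if i = 0 then 0 else τ (i - 1)

/-- `r` is a run of `A` on the infinite timed word `ρ` (from the state `r 0`). -/
def TBA.InfRun {α Q C : Type} (A : TBA α Q C) (ρ : InfTW α) (r : ℕ → TState Q C) : Prop :=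
  ∀ i, A.step (r i) (ρ.2 i - prevT ρ.2 i) (ρ.1 i) (r (i + 1))

/-- `r` is an accepting run of `A` on `ρ`: some accepting location occurs infinitely often. -/
def TBA.AccRun {α Q C : Type} (A : TBA α Q C) (ρ : InfTW α) (r : ℕ → TState Q C) : Prop :=
  A.InfRun ρ r ∧ ∃ q ∈ A.final, ∀ n, ∃ m, n ≤ m ∧ (r m).1 = q

/-- The language of `A` from a state `s`. -/
def TBA.Lang {α Q C : Type} (A : TBA α Q C) (s : TState Q C) : Set (InfTW α) :=
  {ρ | IsInfTW ρ ∧ ∃ r, r 0 = s ∧ A.AccRun ρ r}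

/-- The language of `A` (from its initial locations, with all clocks 0). -/
def TBA.LangInit {α Q C : Type} (A : TBA α Q C) : Set (InfTW α) :=
  {ρ | ∃ q ∈ A.init, ρ ∈ A.Lang (q, fun _ => 0)}

/-- `r` is a run of `A` over the finite timed word `ρ` (from the state `r 0`),
consisting of steps `r 0, …, r (ρ.len + 1)`. -/
def TBA.FinRun {α Q C : Type} (A : TBA α Q C) (ρ : FinTW α) (r : ℕ → TState Q C) : Prop :=
  ∀ i ≤ ρ.len, A.step (r i) (ρ.time i - prevT ρ.time i) (ρ.sym i) (r (i + 1))

/-- The state estimate `Terminal(A, ρ)`: all states reachable by a run of `A` over `ρ`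
from some initial state (initial location, all clocks 0). -/
def TBA.Terminal {α Q C : Type} (A : TBA α Q C) (ρ : FinTW α) : Set (TState Q C) :=
  {s | ∃ r : ℕ → TState Q C, (r 0).1 ∈ A.init ∧ (∀ c, (r 0).2 c = 0) ∧
        A.FinRun ρ r ∧ r (ρ.len + 1) = s}

/-- `NonEmpty(A)`: the states of `A` with a non-empty language. -/
def TBA.NonEmptySt {α Q C : Type} (A : TBA α Q C) : Set (TState Q C) :=
  {s | (A.Lang s).Nonempty}

/-! ## Auxiliary lemmas -/

section Aux

variable {α Q C : Type}

lemma catInf_time_le (ρ : FinTW α) (μ : InfTW α) {i : ℕ} (h : i ≤ ρ.len) :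
    (ρ.catInf μ).2 i = ρ.time i := if_pos h

lemma catInf_sym_le (ρ : FinTW α) (μ : InfTW α) {i : ℕ} (h : i ≤ ρ.len) :
    (ρ.catInf μ).1 i = ρ.sym i := if_pos h

lemma catInf_time_gt (ρ : FinTW α) (μ : InfTW α) (k : ℕ) :
    (ρ.catInf μ).2 (ρ.len + 1 + k) = ρ.dur + μ.2 k := by
  show (if ρ.len + 1 + k ≤ ρ.len then ρ.time (ρ.len + 1 + k)
        else ρ.dur + μ.2 (ρ.len + 1 + k - ρ.len - 1)) = _
  rw [if_neg (by omega), show ρ.len + 1 + k - ρ.len - 1 = k from by omega]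

lemma catInf_sym_gt (ρ : FinTW α) (μ : InfTW α) (k : ℕ) :
    (ρ.catInf μ).1 (ρ.len + 1 + k) = μ.1 k := by
  show (if ρ.len + 1 + k ≤ ρ.len then ρ.sym (ρ.len + 1 + k)
        else μ.1 (ρ.len + 1 + k - ρ.len - 1)) = _
  rw [if_neg (by omega), show ρ.len + 1 + k - ρ.len - 1 = k from by omega]

lemma catInf_delay_le (ρ : FinTW α) (μ : InfTW α) {i : ℕ} (h : i ≤ ρ.len) :
    (ρ.catInf μ).2 i - prevT (ρ.catInf μ).2 i = ρ.time i - prevT ρ.time i := by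
  rw [catInf_time_le ρ μ h]
  unfold prevT
  rcases Nat.eq_zero_or_pos i with h0 | h0
  · simp [h0]
  · rw [if_neg (by omega), if_neg (by omega), catInf_time_le ρ μ (by omega)]

lemma catInf_delay_gt (ρ : FinTW α) (μ : InfTW α) (k : ℕ) :
    (ρ.catInf μ).2 (ρ.len + 1 + k) - prevT (ρ.catInf μ).2 (ρ.len + 1 + k)
      = μ.2 k - prevT μ.2 k := by
  rw [catInf_time_gt]
  unfold prevT
  cases k with
  | zero =>
    rw [if_neg (by omega), if_pos rfl]
    rw [show ρ.len + 1 + 0 - 1 = ρ.len from by omega, catInf_time_le ρ μ le_rfl]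
    show ρ.dur + μ.2 0 - ρ.time ρ.len = μ.2 0 - 0
    unfold FinTW.dur
    ring
  | succ k =>
    rw [if_neg (by omega), if_neg (by omega)]
    rw [show ρ.len + 1 + (k + 1) - 1 = ρ.len + 1 + k from by omega, catInf_time_gt]
    rw [show k + 1 - 1 = k from rfl]
    ring

lemma isInfTW_catInf (ρ : FinTW α) (μ : InfTW α) (hρ : IsFinTW ρ) (hμ : IsInfTW μ) :
    IsInfTW (ρ.catInf μ) := by
  constructor
  · rw [catInf_time_le ρ μ (Nat.zero_le _)]; exact hρ.1
  · apply strictMono_nat_of_lt_succ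
    intro i
    rcases lt_trichotomy i ρ.len with h | h | h
    · rw [catInf_time_le ρ μ h.le, catInf_time_le ρ μ h]
      exact hρ.2 i h
    · subst h
      rw [catInf_time_le ρ μ le_rfl,
        show ρ.len + 1 = ρ.len + 1 + 0 from rfl, catInf_time_gt]
      have h0 : 0 < μ.2 0 := hμ.1
      unfold FinTW.dur
      linarith
    · obtain ⟨k, rfl⟩ : ∃ k, i = ρ.len + 1 + k := ⟨i - ρ.len - 1, by omega⟩
      rw [catInf_time_gt, show ρ.len + 1 + k + 1 = ρ.len + 1 + (k + 1) from rfl,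
        catInf_time_gt]
      have := hμ.2 (Nat.lt_succ_self k)
      linarith

lemma divergent_catInf (ρ : FinTW α) (μ : InfTW α) (hρ : IsFinTW ρ) (hμ : IsDivergent μ) :
    IsDivergent (ρ.catInf μ) := by
  refine ⟨isInfTW_catInf ρ μ hρ hμ.1, ?_⟩
  have hsub : Tendsto (fun i : ℕ => i - ρ.len - 1) atTop atTop := by
    simp only [Nat.sub_sub]
    exact tendsto_sub_atTop_nat (ρ.len + 1)
  have h1 : Tendsto (fun i : ℕ => ρ.dur + μ.2 (i - ρ.len - 1)) atTop atTop :=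
    tendsto_atTop_add_const_left _ _ (hμ.2.comp hsub)
  apply h1.congr'
  filter_upwards [eventually_ge_atTop (ρ.len + 1)] with i hi
  exact (if_neg (by omega)).symm

lemma divergent_of_catInf (ρ : FinTW α) (μ : InfTW α) (hμ : IsInfTW μ)
    (h : Tendsto (ρ.catInf μ).2 atTop atTop) : IsDivergent μ := by
  refine ⟨hμ, ?_⟩
  have h1 : Tendsto (fun k : ℕ => (ρ.catInf μ).2 (ρ.len + 1 + k)) atTop atTop :=
    h.comp (tendsto_atTop_atTop_of_monotone (fun a b hab => by omega)
      (fun b => ⟨b, by omega⟩))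
  have h2 : Tendsto (fun k : ℕ => (ρ.catInf μ).2 (ρ.len + 1 + k) + -ρ.dur) atTop atTop :=
    tendsto_atTop_add_const_right _ _ h1
  apply h2.congr
  intro k
  rw [catInf_time_gt]
  ring

def glueRun (ρ : FinTW α) (r r' : ℕ → TState Q C) : ℕ → TState Q C :=
  fun i => if i ≤ ρ.len then r i else r' (i - ρ.len - 1)

lemma glueRun_le (ρ : FinTW α) (r r' : ℕ → TState Q C) {i : ℕ} (h : i ≤ ρ.len) :
    glueRun ρ r r' i = r i := if_pos h

lemma glueRun_gt (ρ : FinTW α) (r r' : ℕ → TState Q C) (k : ℕ) :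
    glueRun ρ r r' (ρ.len + 1 + k) = r' k := by
  unfold glueRun
  rw [if_neg (by omega)]
  congr 1
  omega

lemma key (A : TBA α Q C) (hA : A.LangInit ⊆ {μ | IsDivergent μ})
    (ρ : FinTW α) (hρ : IsFinTW ρ) :
    (A.Terminal ρ ∩ A.NonEmptySt).Nonempty ↔
      ∃ μ, IsDivergent μ ∧ ρ.catInf μ ∈ A.LangInit := by
  constructor
  · rintro ⟨s, ⟨r, hinit, hzero, hfin, hlast⟩, ν, hν, r', hr'0, hr'run, q, hqF, hq⟩
    have hRle : ∀ i ≤ ρ.len + 1, glueRun ρ r r' i = r i := by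
      intro i hi
      rcases Nat.lt_or_ge i (ρ.len + 1) with h | h
      · exact glueRun_le ρ r r' (by omega)
      · rw [show i = ρ.len + 1 + 0 from by omega, glueRun_gt, hr'0,
          show ρ.len + 1 + 0 = ρ.len + 1 from rfl, hlast]
    have hrun : A.InfRun (ρ.catInf ν) (glueRun ρ r r') := by
      intro i
      rcases le_or_gt i ρ.len with h | h
      · rw [catInf_delay_le ρ ν h, catInf_sym_le ρ ν h, hRle i (by omega),
          hRle (i + 1) (by omega)]
        exact hfin i h
      · obtain ⟨k, rfl⟩ : ∃ k, i = ρ.len + 1 + k := ⟨i - ρ.len - 1, by omega⟩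
        rw [catInf_delay_gt, catInf_sym_gt, glueRun_gt,
          show ρ.len + 1 + k + 1 = ρ.len + 1 + (k + 1) from rfl, glueRun_gt]
        exact hr'run k
    have hmem : ρ.catInf ν ∈ A.LangInit := by
      refine ⟨(r 0).1, hinit, isInfTW_catInf ρ ν hρ hν, glueRun ρ r r', ?_, hrun, q, hqF,
        fun n => ?_⟩
      · rw [glueRun_le ρ r r' (Nat.zero_le _)]
        exact Prod.ext rfl (funext hzero)
      · obtain ⟨m, hm, hqm⟩ := hq n
        exact ⟨ρ.len + 1 + m, by omega, by rw [glueRun_gt]; exact hqm⟩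
    exact ⟨ν, divergent_of_catInf ρ ν hν (hA hmem).2, hmem⟩
  · rintro ⟨μ, hμdiv, q, hq, hcatTW, R, hR0, hRrun, qf, hqfF, hqf⟩
    refine ⟨R (ρ.len + 1), ⟨R, ?_, ?_, ?_, rfl⟩,
      μ, hμdiv.1, fun k => R (ρ.len + 1 + k), rfl, ?_, qf, hqfF, ?_⟩
    · rw [hR0]; exact hq
    · intro c; rw [hR0]
    · intro i hi
      have := hRrun i
      rwa [catInf_delay_le ρ μ hi, catInf_sym_le ρ μ hi] at this
    · intro k
      have := hRrun (ρ.len + 1 + k)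
      rwa [catInf_delay_gt, catInf_sym_gt,
        show ρ.len + 1 + k + 1 = ρ.len + 1 + (k + 1) from rfl] at this
    · intro n
      obtain ⟨m, hm, h⟩ := hqf (ρ.len + 1 + n)
      refine ⟨m - ρ.len - 1, by omega, ?_⟩
      show (R (ρ.len + 1 + (m - ρ.len - 1))).1 = qf
      rw [show ρ.len + 1 + (m - ρ.len - 1) = m from by omega]
      exact h

end Aux

/-! ## Statement 3 -/

open Classical in
theorem stmt3 {α Q C Q' C' : Type} [Finite α] [Nonempty α] [Finite Q] [Finite C]
    [Finite Q'] [Finite C']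
    (φ : Set (InfTW α)) (hφ : ∀ ρ ∈ φ, IsInfTW ρ)
    (B : TBA α Q C) (Bbar : TBA α Q' C')
    (hBfin : B.trans.Finite) (hBbarfin : Bbar.trans.Finite)
    (hB : B.LangInit = φ ∩ {μ | IsDivergent μ})
    (hBbar : Bbar.LangInit = ({μ | IsInfTW μ} \ φ) ∩ {μ | IsDivergent μ})
    (ρ : FinTW α) (hρ : IsFinTW ρ) :
    (Bbar.Terminal ρ ∩ Bbar.NonEmptySt = ∅ ↔ VD φ ρ = .top) ∧
    (B.Terminal ρ ∩ B.NonEmptySt = ∅ ↔ VD φ ρ = .bot) ∧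
    (if Bbar.Terminal ρ ∩ Bbar.NonEmptySt = ∅ then Verdict.top
     else if B.Terminal ρ ∩ B.NonEmptySt = ∅ then Verdict.bot
     else Verdict.unknown) = VD φ ρ := by
  obtain ⟨a⟩ := ‹Nonempty α›
  have hex : ∃ μ : InfTW α, IsDivergent μ := by
    refine ⟨(fun _ => a, fun i => (i : ℝ) + 1), ⟨by norm_num, ?_⟩, ?_⟩
    · apply strictMono_nat_of_lt_succ
      intro n
      push_cast
      linarith
    · exact tendsto_atTop_add_const_right _ _ tendsto_natCast_atTop_atTop
  have keyBbar := key Bbar (by rw [hBbar]; exact fun μ hμ => hμ.2) ρ hρ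
  have keyB := key B (by rw [hB]; exact fun μ hμ => hμ.2) ρ hρ
  have memBbar : ∀ μ, IsDivergent μ → (ρ.catInf μ ∈ Bbar.LangInit ↔ ρ.catInf μ ∉ φ) := by
    intro μ hμ
    rw [hBbar]
    have h1 : IsInfTW (ρ.catInf μ) := isInfTW_catInf ρ μ hρ hμ.1
    have h2 : IsDivergent (ρ.catInf μ) := divergent_catInf ρ μ hρ hμ
    simp only [Set.mem_inter_iff, Set.mem_diff, Set.mem_setOf_eq]
    tauto
  have memB : ∀ μ, IsDivergent μ → (ρ.catInf μ ∈ B.LangInit ↔ ρ.catInf μ ∈ φ) := by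
    intro μ hμ
    rw [hB]
    have h2 : IsDivergent (ρ.catInf μ) := divergent_catInf ρ μ hρ hμ
    simp only [Set.mem_inter_iff, Set.mem_setOf_eq]
    tauto
  have hTopSet : Bbar.Terminal ρ ∩ Bbar.NonEmptySt = ∅ ↔
      ∀ μ, IsDivergent μ → ρ.catInf μ ∈ φ := by
    rw [← Set.not_nonempty_iff_eq_empty, keyBbar]
    constructor
    · intro h μ hμ
      by_contra hc
      exact h ⟨μ, hμ, (memBbar μ hμ).2 hc⟩
    · rintro h ⟨μ, hμ, hmem⟩
      exact (memBbar μ hμ).1 hmem (h μ hμ)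
  have hBotSet : B.Terminal ρ ∩ B.NonEmptySt = ∅ ↔
      ∀ μ, IsDivergent μ → ρ.catInf μ ∉ φ := by
    rw [← Set.not_nonempty_iff_eq_empty, keyB]
    constructor
    · intro h μ hμ hc
      exact h ⟨μ, hμ, (memB μ hμ).2 hc⟩
    · rintro h ⟨μ, hμ, hmem⟩
      exact h μ hμ ((memB μ hμ).1 hmem)
  have hVDtop : VD φ ρ = .top ↔ ∀ μ, IsDivergent μ → ρ.catInf μ ∈ φ := by
    unfold VD
    split_ifs with h1 h2
    · exact iff_of_true rfl h1
    · exact iff_of_false (by simp) h1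
    · exact iff_of_false (by simp) h1
  have hVDbot : VD φ ρ = .bot ↔ ∀ μ, IsDivergent μ → ρ.catInf μ ∉ φ := by
    unfold VD
    split_ifs with h1 h2
    · obtain ⟨μ, hμ⟩ := hex
      exact iff_of_false (by simp) (fun h => h μ hμ (h1 μ hμ))
    · exact iff_of_true rfl h2
    · exact iff_of_false (by simp) h2
  refine ⟨hTopSet.trans hVDtop.symm, hBotSet.trans hVDbot.symm, ?_⟩
  split_ifs with h1 h2
  · exact ((hTopSet.trans hVDtop.symm).mp h1).symm
  · exact ((hBotSet.trans hVDbot.symm).mp h2).symm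
  · cases hv : VD φ ρ with
    | top => exact absurd ((hTopSet.trans hVDtop.symm).mpr hv) h1
    | bot => exact absurd ((hBotSet.trans hVDbot.symm).mpr hv) h2
    | unknown => rfl
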